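/- Let P be the path complex of the digraph with vertices {1,2,3,4} and edges {(1,2),(1,3),(2,3),(2,4),(3,4)}, and let ∂ be the Mayer boundary with a primitive N-th root of unity ξ. Then ∂²(e_{1,2,3,4}) contains the term (ξ² + ξ³)·e_{1,4} plus a combination of allowed 1-paths; in particular for N ≥ 3 the element e_{1,2,3,4} lies in Ω_3^{N,1} but not in Ω_3^{N,2}. -/
import Mathlib


open scoped BigOperators Classical

/-- `Lam V p` is the free ℂ-vector space on sequences of `p` elements of `V`
(elementary `n`-paths, having `n+1` vertices, live in `Lam V (n+1)`). -/
abbrev Lam (V : Type) (p : ℕ) := (Fin p → V) →₀ ℂ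

/-- A sequence is regular if consecutive entries are different. -/
def RegularPath {V : Type} {p : ℕ} (f : Fin p → V) : Prop :=
  ∀ i j : Fin p, (i : ℕ) + 1 = (j : ℕ) → f i ≠ f j

/-- The regular Mayer boundary `∂(e_{i_0⋯i_n}) = Σ_j ξ^j e_{i_0⋯î_j⋯i_n}`,
where irregular paths in the image are set to `0`. -/
noncomputable def rbdry (V : Type) (ξ : ℂ) (p : ℕ) : Lam V (p + 1) →ₗ[ℂ] Lam V p :=
  Finsupp.lsum ℂ fun f =>
    ∑ j : Fin (p + 1), (ξ ^ (j : ℕ)) •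
      (if RegularPath (f ∘ j.succAbove) then Finsupp.lsingle (f ∘ j.succAbove) else 0)

/-- The regular Mayer boundary in all degrees (zero on `0`-paths). -/
noncomputable def rbdry' (V : Type) (ξ : ℂ) : ∀ p, Lam V p →ₗ[ℂ] Lam V (p - 1)
  | 0 => 0
  | 1 => 0
  | p + 2 => rbdry V ξ (p + 1)

/-- The `r`-fold iterate `∂^r`. -/
noncomputable def rbdryIter (V : Type) (ξ : ℂ) :
    (r : ℕ) → (p : ℕ) → Lam V p →ₗ[ℂ] Lam V (p - r)
  | 0, _ => LinearMap.id
  | r + 1, p => (rbdry' V ξ (p - r)).comp (rbdryIter V ξ r p)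

/-- `𝒜_p`: the span of the allowed paths of a path complex `P`. -/
noncomputable def Allowed (V : Type) (P : ∀ p : ℕ, Set (Fin p → V)) (p : ℕ) : Submodule ℂ (Lam V p) :=
  Finsupp.supported ℂ ℂ (P p)


/-- The path complex of a digraph with edge set `E` on vertex set `W ⊆ V`:
allowed `p`-vertex sequences are directed paths in the digraph. -/
def digraphPaths (V : Type) (W : Set V) (E : Set (V × V)) :
    ∀ p : ℕ, Set (Fin p → V) :=
  fun p => {f | (∀ i, f i ∈ W) ∧ ∀ i j : Fin p, (i : ℕ) + 1 = (j : ℕ) → (f i, f j) ∈ E}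

/-- The edge set of the digraph of Example 3.1. -/
def Ex1Edges : Set (ℕ × ℕ) := {(1,2), (1,3), (2,3), (2,4), (3,4)}

/-- `Ω_n^{N,q} = {v ∈ 𝒜_n : ∂^q v ∈ 𝒜_{n-q}}` (degrees shifted: `n`-paths have
`n+1` vertices and live in degree `p = n+1`). -/
def OmegaNq (V : Type) (ξ : ℂ) (P : ∀ p : ℕ, Set (Fin p → V)) (q p : ℕ) :
    Set (Lam V p) :=
  {v | v ∈ Allowed V P p ∧ rbdryIter V ξ q p v ∈ Allowed V P (p - q)}


lemma rbdry_single (ξ : ℂ) (p : ℕ) (f : Fin (p+1) → ℕ) :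
    rbdry ℕ ξ p (Finsupp.single f 1) =
      ∑ j : Fin (p+1), ξ^(j:ℕ) •
        (if RegularPath (f ∘ j.succAbove) then Finsupp.single (f ∘ j.succAbove) (1:ℂ) else 0) := by
  simp [rbdry, Finsupp.lsum_single, LinearMap.sum_apply,
    apply_ite (fun L : ℂ →ₗ[ℂ] Lam ℕ p => L 1), LinearMap.smul_apply, Finsupp.lsingle_apply,
    Finsupp.smul_single, smul_ite]

instance {p : ℕ} (f : Fin p → ℕ) : Decidable (RegularPath f) := by
  unfold RegularPath; infer_instance

lemma comp_eq {p : ℕ} (f : Fin (p+1) → ℕ) (j : Fin (p+1)) (g : Fin p → ℕ)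
    (h : ∀ i, f (j.succAbove i) = g i) : f ∘ j.succAbove = g := funext h

lemma bdry3 (ξ : ℂ) : rbdry ℕ ξ 3 (Finsupp.single ![1,2,3,4] 1) =
    Finsupp.single ![2,3,4] 1 + ξ • Finsupp.single ![1,3,4] 1
      + ξ^2 • Finsupp.single ![1,2,4] 1 + ξ^3 • Finsupp.single ![1,2,3] (1:ℂ) := by
  rw [rbdry_single, Fin.sum_univ_four]
  rw [comp_eq _ 0 ![2,3,4] (by decide), comp_eq _ 1 ![1,3,4] (by decide),
      comp_eq _ 2 ![1,2,4] (by decide), comp_eq _ 3 ![1,2,3] (by decide)]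
  rw [if_pos (by decide), if_pos (by decide), if_pos (by decide), if_pos (by decide)]
  simp only [Fin.val_zero, Fin.val_one, show ((2:Fin 4):ℕ)=2 from rfl,
    show ((3:Fin 4):ℕ)=3 from rfl, pow_zero, pow_one, one_smul]

lemma reg2 {a b : ℕ} (h : a ≠ b) : RegularPath ![a,b] := by
  intro i j hij
  fin_cases i <;> fin_cases j <;> simp_all

lemma bdry2 (ξ : ℂ) (a b c : ℕ) (hab : a ≠ b) (hbc : b ≠ c) (hac : a ≠ c) :
    rbdry ℕ ξ 2 (Finsupp.single ![a,b,c] 1) =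
      Finsupp.single ![b,c] 1 + ξ • Finsupp.single ![a,c] 1 + ξ^2 • Finsupp.single ![a,b] (1:ℂ) := by
  rw [rbdry_single, Fin.sum_univ_three]
  rw [comp_eq _ 0 ![b,c] (fun i => by fin_cases i <;> rfl),
      comp_eq _ 1 ![a,c] (fun i => by fin_cases i <;> rfl),
      comp_eq _ 2 ![a,b] (fun i => by fin_cases i <;> rfl)]
  rw [if_pos (reg2 hbc), if_pos (reg2 hac), if_pos (reg2 hab)]
  simp only [Fin.val_zero, Fin.val_one, show ((2:Fin 3):ℕ)=2 from rfl, pow_zero, pow_one, one_smul]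

lemma bdry33 (ξ : ℂ) : rbdry ℕ ξ 2 (rbdry ℕ ξ 3 (Finsupp.single ![1,2,3,4] 1)) =
    (1+ξ) • Finsupp.single ![3,4] 1 + (ξ+ξ^2) • Finsupp.single ![2,4] 1
      + (ξ^2+ξ^3) • Finsupp.single ![2,3] 1 + (ξ^2+ξ^3) • Finsupp.single ![1,4] 1
      + (ξ^3+ξ^4) • Finsupp.single ![1,3] 1 + (ξ^4+ξ^5) • Finsupp.single ![1,2] (1:ℂ) := by
  rw [bdry3, map_add, map_add, map_add, map_smul, map_smul, map_smul,
    bdry2 ξ 2 3 4 (by decide) (by decide) (by decide),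
    bdry2 ξ 1 3 4 (by decide) (by decide) (by decide),
    bdry2 ξ 1 2 4 (by decide) (by decide) (by decide),
    bdry2 ξ 1 2 3 (by decide) (by decide) (by decide)]
  module

lemma mem_paths2 (a b : ℕ) (ha : a ∈ ({1,2,3,4}:Set ℕ)) (hb : b ∈ ({1,2,3,4}:Set ℕ))
    (hab : (a,b) ∈ Ex1Edges) : ![a,b] ∈ digraphPaths ℕ {1,2,3,4} Ex1Edges 2 := by
  refine ⟨fun i => ?_, fun i j hij => ?_⟩
  · fin_cases i <;> assumption
  · fin_cases i <;> fin_cases j <;> simp_all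

lemma mem_paths3 (a b c : ℕ) (ha : a ∈ ({1,2,3,4}:Set ℕ)) (hb : b ∈ ({1,2,3,4}:Set ℕ))
    (hc : c ∈ ({1,2,3,4}:Set ℕ)) (hab : (a,b) ∈ Ex1Edges) (hbc : (b,c) ∈ Ex1Edges) :
    ![a,b,c] ∈ digraphPaths ℕ {1,2,3,4} Ex1Edges 3 := by
  refine ⟨fun i => ?_, fun i j hij => ?_⟩
  · fin_cases i <;> assumption
  · fin_cases i <;> fin_cases j <;> simp_all

lemma mem_paths4 : ![1,2,3,4] ∈ digraphPaths ℕ {1,2,3,4} Ex1Edges 4 := by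
  refine ⟨fun i => ?_, fun i j hij => ?_⟩
  · fin_cases i <;> simp
  · fin_cases i <;> fin_cases j <;> simp_all [Ex1Edges]

lemma iter2 (ξ : ℂ) (x : Lam ℕ 4) :
    rbdryIter ℕ ξ 2 4 x = rbdry ℕ ξ 2 (rbdry ℕ ξ 3 x) := rfl

lemma iter1 (ξ : ℂ) (x : Lam ℕ 4) :
    rbdryIter ℕ ξ 1 4 x = rbdry ℕ ξ 3 x := rfl

/-- For the digraph with vertices `{1,2,3,4}` and edges
`{(1,2),(1,3),(2,3),(2,4),(3,4)}` and the Mayer boundary with a primitive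
`N`-th root of unity `ξ`, `N ≥ 3`:  `∂²(e_{1,2,3,4})` equals
`(ξ²+ξ³)·e_{1,4}` plus a combination of allowed `1`-paths, and `e_{1,2,3,4}`
lies in `Ω_3^{N,1}` but not in `Ω_3^{N,2}`. -/
theorem example_diamond (N : ℕ) (hN : 3 ≤ N) (ξ : ℂ) (hξ : IsPrimitiveRoot ξ N) :
    (∃ v ∈ Allowed ℕ (digraphPaths ℕ {1,2,3,4} Ex1Edges) 2,
        rbdryIter ℕ ξ 2 4 (Finsupp.single ![1,2,3,4] (1 : ℂ)) =
          (ξ ^ 2 + ξ ^ 3) • Finsupp.single ![1,4] (1 : ℂ) + v) ∧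
    Finsupp.single ![1,2,3,4] (1 : ℂ) ∈
      OmegaNq ℕ ξ (digraphPaths ℕ {1,2,3,4} Ex1Edges) 1 4 ∧
    Finsupp.single ![1,2,3,4] (1 : ℂ) ∉
      OmegaNq ℕ ξ (digraphPaths ℕ {1,2,3,4} Ex1Edges) 2 4 := by
  have hmem : ∀ (a b : ℕ) (c : ℂ), (a,b) ∈ Ex1Edges → a ∈ ({1,2,3,4}:Set ℕ) → b ∈ ({1,2,3,4}:Set ℕ) →
      Finsupp.single ![a,b] c ∈ Allowed ℕ (digraphPaths ℕ {1,2,3,4} Ex1Edges) 2 := by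
    intro a b c hE ha hb
    exact Finsupp.single_mem_supported ℂ c (mem_paths2 a b ha hb hE)
  refine ⟨⟨(1+ξ) • Finsupp.single ![3,4] 1 + (ξ+ξ^2) • Finsupp.single ![2,4] 1
      + (ξ^2+ξ^3) • Finsupp.single ![2,3] 1
      + (ξ^3+ξ^4) • Finsupp.single ![1,3] 1 + (ξ^4+ξ^5) • Finsupp.single ![1,2] (1:ℂ), ?_, ?_⟩, ?_, ?_⟩
  · refine Submodule.add_mem _ (Submodule.add_mem _ (Submodule.add_mem _ (Submodule.add_mem _
      (Submodule.smul_mem _ _ ?_) (Submodule.smul_mem _ _ ?_)) (Submodule.smul_mem _ _ ?_))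
      (Submodule.smul_mem _ _ ?_)) (Submodule.smul_mem _ _ ?_) <;>
    · apply hmem <;> simp [Ex1Edges]
  · rw [iter2, bdry33]; module
  · constructor
    · exact Finsupp.single_mem_supported ℂ _ mem_paths4
    · rw [iter1, bdry3]
      refine Submodule.add_mem _ (Submodule.add_mem _ (Submodule.add_mem _ ?_
        (Submodule.smul_mem _ _ ?_)) (Submodule.smul_mem _ _ ?_)) (Submodule.smul_mem _ _ ?_) <;>
      · refine Finsupp.single_mem_supported ℂ _ (mem_paths3 _ _ _ ?_ ?_ ?_ ?_ ?_) <;> simp [Ex1Edges]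
  · rintro ⟨-, hA⟩
    rw [iter2] at hA
    have hval : rbdry ℕ ξ 2 (rbdry ℕ ξ 3 (Finsupp.single ![1,2,3,4] 1)) ![1,4] = ξ^2+ξ^3 := by
      rw [bdry33]
      simp [Finsupp.single_apply, show ¬(![3,4] = ![(1:ℕ),4]) from by decide,
        show ¬(![2,4] = ![(1:ℕ),4]) from by decide, show ¬(![2,3] = ![(1:ℕ),4]) from by decide,
        show ¬(![1,3] = ![(1:ℕ),4]) from by decide, show ¬(![1,2] = ![(1:ℕ),4]) from by decide]
    have hne : (ξ^2+ξ^3 : ℂ) ≠ 0 := by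
      have h0 : ξ ≠ 0 := hξ.ne_zero (by omega)
      have h2 : ξ^2 ≠ 1 := hξ.pow_ne_one_of_pos_of_lt (by norm_num) (by omega)
      intro h
      apply h2
      show ξ^2 = 1
      have : ξ^2 * (1 + ξ) = 0 := by ring_nf; linear_combination h
      rcases mul_eq_zero.mp this with h' | h'
      · exact absurd (pow_eq_zero_iff (by norm_num) |>.mp h') h0
      · rw [eq_neg_of_add_eq_zero_right h']; ring
    have hsupp : ![1,4] ∈ (rbdry ℕ ξ 2 (rbdry ℕ ξ 3 (Finsupp.single ![1,2,3,4] 1))).support := by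
      rw [Finsupp.mem_support_iff, hval]; exact hne
    have := hA hsupp
    obtain ⟨-, h2⟩ := this
    have := h2 0 1 rfl
    simp [Ex1Edges] at this
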